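/- arXiv:2008.07277 — 4 statements merged into one kernel-verified Lean document; each statement's English description precedes it below -/
import Mathlib

section
/- Let n ≥ 1 be a natural number, and let β, h, α_prev be real numbers, λ : Fin n → ℝ a family of regularization coefficients (one per ancestor level), and α̂ : Fin n → ℝ the virtual learning rates of the n ancestor levels. Define the virtual leaf learning rate α̂_L = α_prev + β·h, and define the regularized leaf update under the virtual approximation by α* = α_prev − β·(−h + ∑_{j : Fin n} 2·λ j·(α̂_L − α̂ j)). Set γ_L = 1 − 2·β·∑_{j} λ j and γ j = 2·β·λ j for each j : Fin n. Then α* = γ_L·α̂_L + ∑_{j} γ j·α̂ j, and γ_L + ∑_{j} γ j = 1. In other words, under the virtual approximation, adding pairwise L2 regularization between the leaf learning rate and each of its ancestors is equivalent to taking a weighted linear combination of the virtual learning rates at the different levels, with combination weights summing to 1. -/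
namespace Finset

variable {R ι : Type*} [CommRing R]

theorem sub_mul_sum_two_mul_sub_eq (s : Finset ι) (c x : R) (lam y : ι → R) :
    x - c * ∑ j ∈ s, 2 * lam j * (x - y j) =
      (1 - 2 * c * ∑ j ∈ s, lam j) * x + ∑ j ∈ s, 2 * c * lam j * y j := by
  have hsplit : ∑ j ∈ s, 2 * lam j * (x - y j) =
      2 * x * ∑ j ∈ s, lam j - ∑ j ∈ s, 2 * lam j * y j := by
    rw [mul_sum, ← sum_sub_distrib]
    exact sum_congr rfl fun j _ => by ring
  have hpull : ∑ j ∈ s, 2 * c * lam j * y j = c * ∑ j ∈ s, 2 * lam j * y j := by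
    rw [mul_sum]
    exact sum_congr rfl fun j _ => by ring
  rw [hsplit, hpull]
  ring

theorem sub_two_mul_sum_add_sum_two_mul (s : Finset ι) (c : R) (lam : ι → R) :
    1 - 2 * c * ∑ j ∈ s, lam j + ∑ j ∈ s, 2 * c * lam j = 1 := by
  rw [mul_sum, sub_add_cancel]

end Finset

theorem cam_hd_regularization_as_combination_general
    (n : ℕ) (β h α_prev : ℝ) (lam : Fin n → ℝ) (αhat : Fin n → ℝ)
    (αhatL : ℝ) (hαhatL : αhatL = α_prev + β * h)
    (αstar : ℝ)
    (hαstar : αstar = α_prev - β * (-h + ∑ j : Fin n, 2 * lam j * (αhatL - αhat j)))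
    (γL : ℝ) (hγL : γL = 1 - 2 * β * ∑ j : Fin n, lam j)
    (γ : Fin n → ℝ) (hγ : ∀ j : Fin n, γ j = 2 * β * lam j) :
    αstar = γL * αhatL + ∑ j : Fin n, γ j * αhat j ∧ γL + ∑ j : Fin n, γ j = 1 := by
  have hαstar_virtual : αstar = αhatL - β * ∑ j, 2 * lam j * (αhatL - αhat j) := by
    rw [hαstar, hαhatL]
    ring
  obtain rfl : γ = fun j => 2 * β * lam j := funext hγ
  subst hγL
  exact ⟨hαstar_virtual.trans (Finset.sub_mul_sum_two_mul_sub_eq _ _ _ _ _),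
    Finset.sub_two_mul_sum_add_sum_two_mul _ _ _⟩

/-- Under the virtual approximation, adding pairwise L2 regularization between the leaf
learning rate and each of its `n` ancestors is equivalent to taking a weighted linear
combination of the virtual learning rates at the different levels, with weights summing to 1. -/
theorem cam_hd_regularization_as_combination
    (n : ℕ) (hn : 1 ≤ n) (β h α_prev : ℝ) (lam : Fin n → ℝ) (αhat : Fin n → ℝ)
    (αhatL : ℝ) (hαhatL : αhatL = α_prev + β * h)
    (αstar : ℝ)
    (hαstar : αstar = α_prev - β * (-h + ∑ j : Fin n, 2 * lam j * (αhatL - αhat j)))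
    (γL : ℝ) (hγL : γL = 1 - 2 * β * ∑ j : Fin n, lam j)
    (γ : Fin n → ℝ) (hγ : ∀ j : Fin n, γ j = 2 * β * lam j) :
    αstar = γL * αhatL + ∑ j : Fin n, γ j * αhat j ∧ γL + ∑ j : Fin n, γ j = 1 :=
  cam_hd_regularization_as_combination_general n β h α_prev lam αhat αhatL hαhatL αstar hαstar γL
    hγL γ hγ
end

section
/- Let β, λ, α_prev, h, α_g be real numbers with 1 + 2·β·λ ≠ 0. Define the virtual layer-wise learning rate α̂ = α_prev + β·h and take the virtual global rate equal to α_g. Let α be the exact solution of the implicit regularized update α = α_prev + β·h − 2·β·λ·(α − α_g), and let α* = α̂ − 2·β·λ·(α̂ − α_g) be the update obtained via the virtual approximation. Then α* − α = −4·β²·λ²·(α − α_g). In particular, the error of the virtual approximation vanishes as 4·β²·λ² → 0 or as α approaches α_g. -/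
theorem explicit_step_sub_implicit_step {R : Type*} [CommRing R] (c a a₀ x : R)
    (himplicit : x = a - c * (x - a₀)) :
    a - c * (a - a₀) - x = -c ^ 2 * (x - a₀) := by
  -- `himplicit` says `a - x = c * (x - a₀)`: the explicit step overshoots the gap by a factor `c`.
  linear_combination (c - 1) * himplicit

theorem virtual_approximation_error_general
    (β lam α_prev h α_g : ℝ)
    (αhat : ℝ) (hαhat : αhat = α_prev + β * h)
    (α : ℝ) (himp : α = α_prev + β * h - 2 * β * lam * (α - α_g))
    (αstar : ℝ) (hαstar : αstar = αhat - 2 * β * lam * (αhat - α_g)) :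
    αstar - α = -4 * β ^ 2 * lam ^ 2 * (α - α_g) := by
  rw [← hαhat] at himp
  rw [hαstar, explicit_step_sub_implicit_step (2 * β * lam) αhat α_g α himp]
  ring

/-- The error of the virtual approximation of the regularized layer-wise
learning-rate update equals `−4β²λ²(α − α_g)`. -/
theorem virtual_approximation_error
    (β lam α_prev h α_g : ℝ) (hden : 1 + 2 * β * lam ≠ 0)
    (αhat : ℝ) (hαhat : αhat = α_prev + β * h)
    (α : ℝ) (himp : α = α_prev + β * h - 2 * β * lam * (α - α_g))
    (αstar : ℝ) (hαstar : αstar = αhat - 2 * β * lam * (αhat - α_g)) :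
    αstar - α = -4 * β ^ 2 * lam ^ 2 * (α - α_g) :=
  virtual_approximation_error_general β lam α_prev h α_g αhat hαhat α himp αstar hαstar
end

section
/- Let ι be a finite index type, f : EuclideanSpace ℝ ι → ℝ a differentiable function, θ' ∈ EuclideanSpace ℝ ι a previous iterate, and s ⊆ ι a set of coordinates (a parameter group). Define the group update θ(α) ∈ EuclideanSpace ℝ ι by θ(α)_j = θ'_j − α·(gradient f θ')_j for j ∈ s and θ(α)_j = θ'_j for j ∉ s. Then for every α₀ ∈ ℝ, the function α ↦ f(θ(α)) has derivative at α₀ equal to −∑_{j ∈ s} (gradient f (θ(α₀)))_j · (gradient f θ')_j. That is, the hyper-gradient of the objective with respect to the group-wise learning rate α_i equals −∇_{θ_i} f(θ_{t−1})ᵀ ∇_{θ_i} f(θ_{t−2}). -/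
/-! The group-wise update moves `θ'` along the straight line `α ↦ θ' - α • v`, where `v` is
the gradient `∇f(θ')` with the coordinates outside the group set to zero. By the chain rule
the derivative of `f` along this line is `-⟪∇f(θ(α₀)), v⟫`, and the inner product with `v`
only sees the coordinates in the group. -/

section LineDerivative

variable {F : Type*} [NormedAddCommGroup F] [InnerProductSpace ℝ F] [CompleteSpace F]

theorem HasGradientAt.hasDerivAt_comp_sub_smul {f : F → ℝ} {g x v : F} {a : ℝ}
    (hf : HasGradientAt f g (x - a • v)) :
    HasDerivAt (fun a : ℝ => f (x - a • v)) (-inner ℝ g v) a := by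
  have hline : HasDerivAt (fun a : ℝ => x - a • v) (-v) a := by
    simpa using ((hasDerivAt_id a).smul_const v).const_sub x
  have hcomp : HasDerivAt (fun a : ℝ => f (x - a • v)) (inner ℝ g (-v)) a :=
    -- elaborated without expected type: the chain rule states it for another `Module ℝ ℝ` instance
    (hf.hasFDerivAt.comp_hasDerivAt a hline :)
  rwa [inner_neg_right] at hcomp

end LineDerivative

namespace EuclideanSpace

variable {ι : Type*} [DecidableEq ι]

def restrictTo (s : Finset ι) (y : EuclideanSpace ℝ ι) : EuclideanSpace ℝ ι :=
  WithLp.toLp 2 fun j => if j ∈ s then y j else 0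

@[simp]
theorem restrictTo_apply (s : Finset ι) (y : EuclideanSpace ℝ ι) (j : ι) :
    restrictTo s y j = if j ∈ s then y j else 0 :=
  rfl

theorem inner_restrictTo [Fintype ι] (s : Finset ι) (x y : EuclideanSpace ℝ ι) :
    inner ℝ x (restrictTo s y) = ∑ j ∈ s, x j * y j := by
  simp only [PiLp.inner_apply, restrictTo_apply, RCLike.inner_apply, conj_trivial, ite_mul,
    zero_mul, Finset.sum_ite_mem, Finset.univ_inter]
  exact Finset.sum_congr rfl fun _ _ => mul_comm _ _

end EuclideanSpace

/-- The hyper-gradient of the objective with respect to a group-wise learning rate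
equals `−∇_{θ_i} f(θ_{t−1})ᵀ ∇_{θ_i} f(θ_{t−2})`. -/
theorem hypergradient_of_groupwise_learning_rate
    {ι : Type*} [Fintype ι] [DecidableEq ι]
    (f : EuclideanSpace ℝ ι → ℝ) (hf : Differentiable ℝ f)
    (θ' : EuclideanSpace ℝ ι) (s : Finset ι)
    (θ : ℝ → EuclideanSpace ℝ ι)
    (hθ : ∀ α : ℝ, ∀ j : ι,
      θ α j = if j ∈ s then θ' j - α * (gradient f θ') j else θ' j)
    (α₀ : ℝ) :
    HasDerivAt (fun α : ℝ => f (θ α))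
      (-(∑ j ∈ s, (gradient f (θ α₀)) j * (gradient f θ') j)) α₀ := by
  have hline : θ = fun α => θ' - α • EuclideanSpace.restrictTo s (gradient f θ') := by
    funext α
    ext j
    by_cases hj : j ∈ s <;> simp [hθ, hj]
  subst hline
  have hderiv := (hf _).hasGradientAt.hasDerivAt_comp_sub_smul (x := θ')
    (v := EuclideanSpace.restrictTo s (gradient f θ')) (a := α₀)
  rwa [EuclideanSpace.inner_restrictTo] at hderiv
end

section
/- Let E = EuclideanSpace ℝ (Fin n), let f : E → ℝ be convex and differentiable with gradient L-Lipschitz for some L > 0 (i.e., ‖gradient f x − gradient f y‖ ≤ L·‖x − y‖ for all x, y), and suppose f has a unique global minimizer θ* ∈ E. Let κ : ℕ → ℝ be a sequence of step sizes with κ_t → α∞ as t → ∞, where 0 < α∞ < 1/L. Define iterates by θ_{t+1} = θ_t − κ_t • gradient f (θ_t) from any initial point θ_0. Then θ_t → θ* as t → ∞. -/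
/-!
Co-coercivity of the gradient of a convex function with `L`-Lipschitz gradient,
`‖∇f x - ∇f y‖² / L ≤ ⟪∇f x - ∇f y, x - y⟫`, makes every step with step size `a ∈ [a₀, a₁]`,
`0 < a₀ ≤ a₁ < 2 / L`, satisfy `‖x' - θ*‖² + c ‖∇f x‖² ≤ ‖x - θ*‖²` with `c > 0`. Since
`κ t → α∞ ∈ (0, 1 / L)`, this holds from some time on: the distance to `θ*` is then
nonincreasing and `∇f θ_t → 0`. A subsequence converges by compactness, its limit is a critical
point, hence a minimizer by convexity, hence `θ*`; monotonicity of the distance upgrades this to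
convergence of the whole sequence.
-/

open Filter Topology Gradient

open Set RealInnerProductSpace

lemma tendsto_of_antitone_dist_of_mem_closure_range {α : Type*} [PseudoMetricSpace α]
    {x : ℕ → α} {p : α} (hanti : Antitone fun k => dist (x k) p) (hp : p ∈ closure (range x)) :
    Tendsto x atTop (𝓝 p) := by
  refine Metric.tendsto_atTop.2 fun ε hε => ?_
  obtain ⟨N, hN⟩ := Metric.mem_closure_range_iff.1 hp ε hε
  exact ⟨N, fun k hk => (hanti hk).trans_lt ((dist_comm _ _).trans_lt hN)⟩

lemma tendsto_zero_of_add_le_of_bddBelow {u v : ℕ → ℝ} (hv : ∀ k, 0 ≤ v k)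
    (huv : ∀ k, u (k + 1) + v k ≤ u k) (hu : BddBelow (range u)) :
    Tendsto v atTop (𝓝 0) := by
  have hlim := tendsto_atTop_ciInf (antitone_nat_of_succ_le fun k => by linarith [hv k, huv k]) hu
  refine squeeze_zero hv (fun k => le_sub_iff_add_le'.2 (huv k)) ?_
  simpa using hlim.sub (hlim.comp (tendsto_add_atTop_nat 1))

section Smooth

variable {E : Type*} [NormedAddCommGroup E] [InnerProductSpace ℝ E] [CompleteSpace E] {f : E → ℝ}

lemma IsMinOn.gradient_eq_zero {p : E} (hp : IsMinOn f univ p) : ∇ f p = 0 := by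
  simp [gradient, (hp.isLocalMin univ_mem).fderiv_eq_zero]

lemma hasDerivAt_comp_add_smul {x v : E} {t : ℝ} (hf : DifferentiableAt ℝ f (x + t • v)) :
    HasDerivAt (fun s : ℝ => f (x + s • v)) ⟪∇ f (x + t • v), v⟫ t := by
  have hline : HasDerivAt (fun s : ℝ => x + s • v) v t := by
    simpa using ((hasDerivAt_id t).smul_const v).const_add x
  simpa [Function.comp_def] using hf.hasGradientAt.hasFDerivAt.comp_hasDerivAt t hline

lemma ConvexOn.add_inner_gradient_le (hconv : ConvexOn ℝ univ f) (hdiff : Differentiable ℝ f)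
    (x y : E) : f x + ⟪∇ f x, y - x⟫ ≤ f y := by
  have hline : ConvexOn ℝ univ fun s : ℝ => f (x + s • (y - x)) := by
    have hseg : (fun s : ℝ => f (x + s • (y - x))) = f ∘ AffineMap.lineMap x y := by
      ext s
      simp [AffineMap.lineMap_apply_module', add_comm]
    rw [hseg]
    exact hconv.comp_affineMap _
  have := hline.le_slope_of_hasDerivAt (mem_univ 0) (mem_univ 1) one_pos
    (by simpa only [zero_smul, add_zero] using hasDerivAt_comp_add_smul (t := 0) (hdiff _))
  rw [slope_def_field] at this
  simp only [one_smul, zero_smul, add_zero, add_sub_cancel, sub_zero, div_one] at this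
  linarith

lemma ConvexOn.isMinOn_of_gradient_eq_zero (hconv : ConvexOn ℝ univ f)
    (hdiff : Differentiable ℝ f) {p : E} (hp : ∇ f p = 0) : IsMinOn f univ p :=
  fun y _ => by simpa [hp] using hconv.add_inner_gradient_le hdiff p y

lemma le_add_inner_gradient_add_sq_norm (hdiff : Differentiable ℝ f) {L : ℝ}
    (hlip : ∀ x y, ‖∇ f x - ∇ f y‖ ≤ L * ‖x - y‖) (x y : E) :
    f y ≤ f x + ⟪∇ f x, y - x⟫ + L / 2 * ‖y - x‖ ^ 2 := by
  set v := y - x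
  have hline (s : ℝ) := hasDerivAt_comp_add_smul (x := x) (v := v) (t := s) (hdiff _)
  have hquad (s : ℝ) : HasDerivAt (fun s => f x + (s * ⟪∇ f x, v⟫ + s ^ 2 * (L / 2 * ‖v‖ ^ 2)))
      (⟪∇ f x, v⟫ + L * s * ‖v‖ ^ 2) s := by
    refine ((((hasDerivAt_id' s).mul_const ⟪∇ f x, v⟫).add ((hasDerivAt_pow 2 s).mul_const
      (L / 2 * ‖v‖ ^ 2))).const_add (f x)).congr_deriv ?_
    push_cast
    ring
  have hgrowth (s : ℝ) (hs : s ∈ Ico (0 : ℝ) 1) :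
      ⟪∇ f (x + s • v), v⟫ ≤ ⟪∇ f x, v⟫ + L * s * ‖v‖ ^ 2 := by
    have : ⟪∇ f (x + s • v) - ∇ f x, v⟫ ≤ L * s * ‖v‖ ^ 2 :=
      calc ⟪∇ f (x + s • v) - ∇ f x, v⟫
          ≤ ‖∇ f (x + s • v) - ∇ f x‖ * ‖v‖ := real_inner_le_norm _ _
        _ ≤ L * ‖x + s • v - x‖ * ‖v‖ := by gcongr; exact hlip _ _
        _ = L * s * ‖v‖ ^ 2 := by
          rw [add_sub_cancel_left, norm_smul, Real.norm_of_nonneg hs.1]; ring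
    rwa [inner_sub_left, sub_le_iff_le_add'] at this
  have := image_le_of_deriv_right_le_deriv_boundary
    (fun s _ => (hline s).continuousAt.continuousWithinAt) (fun s _ => (hline s).hasDerivWithinAt)
    (by simp) (fun s _ => (hquad s).continuousAt.continuousWithinAt)
    (fun s _ => (hquad s).hasDerivWithinAt) hgrowth (right_mem_Icc.mpr zero_le_one)
  simp only [one_smul, add_sub_cancel, one_mul, one_pow, v] at this
  linarith

lemma ConvexOn.add_inner_gradient_add_sq_div_le (hconv : ConvexOn ℝ univ f)
    (hdiff : Differentiable ℝ f) {L : ℝ} (hL : 0 < L)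
    (hlip : ∀ x y, ‖∇ f x - ∇ f y‖ ≤ L * ‖x - y‖) (x y : E) :
    f x + ⟪∇ f x, y - x⟫ + ‖∇ f y - ∇ f x‖ ^ 2 / (2 * L) ≤ f y := by
  set u := ∇ f y - ∇ f x
  -- a gradient step of length `1 / L` from `y` for `w ↦ f w - ⟪∇ f x, w⟫`, which is minimal at `x`
  set z := y - L⁻¹ • u
  have hlower := hconv.add_inner_gradient_le hdiff x z
  have hupper := le_add_inner_gradient_add_sq_norm hdiff hlip y z
  have hzx : z - x = (y - x) - L⁻¹ • u := by simp only [z]; abel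
  have hzy : z - y = -(L⁻¹ • u) := by simp only [z]; abel
  rw [hzx, inner_sub_right, real_inner_smul_right] at hlower
  rw [hzy, inner_neg_right, real_inner_smul_right, norm_neg, norm_smul, mul_pow,
    Real.norm_of_nonneg (inv_nonneg.2 hL.le)] at hupper
  have hu : L⁻¹ * ⟪∇ f y, u⟫ - L⁻¹ * ⟪∇ f x, u⟫ = L⁻¹ * ‖u‖ ^ 2 := by
    rw [← mul_sub, ← inner_sub_left, real_inner_self_eq_norm_sq]
  have hsplit : ‖u‖ ^ 2 / (2 * L) = L⁻¹ * ‖u‖ ^ 2 - L / 2 * (L⁻¹ ^ 2 * ‖u‖ ^ 2) := by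
    field_simp
    ring
  linarith

lemma ConvexOn.sq_norm_gradient_sub_div_le_inner (hconv : ConvexOn ℝ univ f)
    (hdiff : Differentiable ℝ f) {L : ℝ} (hL : 0 < L)
    (hlip : ∀ x y, ‖∇ f x - ∇ f y‖ ≤ L * ‖x - y‖) (x y : E) :
    ‖∇ f x - ∇ f y‖ ^ 2 / L ≤ ⟪∇ f x - ∇ f y, x - y⟫ := by
  have hxy := hconv.add_inner_gradient_add_sq_div_le hdiff hL hlip x y
  have hyx := hconv.add_inner_gradient_add_sq_div_le hdiff hL hlip y x
  rw [← norm_neg, neg_sub] at hxy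
  have : ⟪∇ f x - ∇ f y, x - y⟫ = -⟪∇ f x, y - x⟫ - ⟪∇ f y, x - y⟫ := by
    simp only [inner_sub_left, inner_sub_right]
    ring
  have : ‖∇ f x - ∇ f y‖ ^ 2 / L = 2 * (‖∇ f x - ∇ f y‖ ^ 2 / (2 * L)) := by
    field_simp
  linarith

lemma ConvexOn.norm_sub_smul_gradient_sub_sq_add_le (hconv : ConvexOn ℝ univ f)
    (hdiff : Differentiable ℝ f) {L : ℝ} (hL : 0 < L)
    (hlip : ∀ x y, ‖∇ f x - ∇ f y‖ ≤ L * ‖x - y‖) {p : E} (hp : ∇ f p = 0) {a : ℝ}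
    (ha : 0 ≤ a) (x : E) :
    ‖x - a • ∇ f x - p‖ ^ 2 + a * (2 / L - a) * ‖∇ f x‖ ^ 2 ≤ ‖x - p‖ ^ 2 := by
  have hco := hconv.sq_norm_gradient_sub_div_le_inner hdiff hL hlip x p
  rw [hp, sub_zero] at hco
  have hstep : x - a • ∇ f x - p = (x - p) - a • ∇ f x := by abel
  rw [hstep, norm_sub_sq_real, real_inner_smul_right, norm_smul, mul_pow, Real.norm_eq_abs,
    sq_abs, real_inner_comm]
  have hco' : a * (‖∇ f x‖ ^ 2 / L) ≤ a * ⟪∇ f x, x - p⟫ := mul_le_mul_of_nonneg_left hco ha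
  have hexpand : a * (2 / L - a) * ‖∇ f x‖ ^ 2 = 2 * (a * (‖∇ f x‖ ^ 2 / L)) - a ^ 2 * ‖∇ f x‖ ^ 2 := by
    ring
  linarith

end Smooth

theorem tendsto_gradient_descent_of_mem_Icc {E : Type*} [NormedAddCommGroup E]
    [InnerProductSpace ℝ E] [ProperSpace E] {f : E → ℝ} (hconv : ConvexOn ℝ univ f)
    (hdiff : Differentiable ℝ f) {L : ℝ} (hL : 0 < L)
    (hlip : ∀ x y, ‖∇ f x - ∇ f y‖ ≤ L * ‖x - y‖) {p : E} (hmin : IsMinOn f univ p)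
    (huniq : ∀ y, IsMinOn f univ y → y = p) {a : ℕ → ℝ} {a₀ a₁ : ℝ} (ha₀ : 0 < a₀)
    (ha₁ : a₁ < 2 / L) (ha : ∀ k, a k ∈ Icc a₀ a₁) {x : ℕ → E}
    (hx : ∀ k, x (k + 1) = x k - a k • ∇ f (x k)) :
    Tendsto x atTop (𝓝 p) := by
  set c := a₀ * (2 / L - a₁)
  have hc : 0 < c := mul_pos ha₀ (sub_pos.2 ha₁)
  have hfejer (k : ℕ) : ‖x (k + 1) - p‖ ^ 2 + c * ‖∇ f (x k)‖ ^ 2 ≤ ‖x k - p‖ ^ 2 := by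
    have hck : c ≤ a k * (2 / L - a k) :=
      mul_le_mul (ha k).1 (by linarith [(ha k).2]) (by linarith) (by linarith [(ha k).1])
    have := hconv.norm_sub_smul_gradient_sub_sq_add_le hdiff hL hlip hmin.gradient_eq_zero
      (ha₀.le.trans (ha k).1) (x k)
    rw [hx k]
    linarith [mul_le_mul_of_nonneg_right hck (sq_nonneg ‖∇ f (x k)‖)]
  have hanti : Antitone fun k => dist (x k) p := by
    refine antitone_nat_of_succ_le fun k => ?_
    simp only [dist_eq_norm]
    refine (pow_le_pow_iff_left₀ (norm_nonneg _) (norm_nonneg _) two_ne_zero).1 ?_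
    linarith [hfejer k, mul_nonneg hc.le (sq_nonneg ‖∇ f (x k)‖)]
  have hgrad : Tendsto (fun k => ∇ f (x k)) atTop (𝓝 0) := by
    have := tendsto_zero_of_add_le_of_bddBelow (u := fun k => ‖x k - p‖ ^ 2)
      (fun k => by positivity) hfejer ⟨0, by rintro _ ⟨k, rfl⟩; positivity⟩
    have hsq : Tendsto (fun k => ‖∇ f (x k)‖ ^ 2) atTop (𝓝 0) := by
      simpa [hc.ne'] using this.const_mul c⁻¹
    simpa [tendsto_zero_iff_norm_tendsto_zero, Real.sqrt_sq (norm_nonneg _)] using hsq.sqrt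
  obtain ⟨z, -, φ, hφ, hxφ⟩ := (isCompact_closedBall p (dist (x 0) p)).tendsto_subseq
    fun k => Metric.mem_closedBall.2 (hanti (Nat.zero_le k))
  have hcont : Continuous (∇ f) :=
    (LipschitzWith.of_dist_le' (K := L) (by simpa [dist_eq_norm] using hlip)).continuous
  have hz : z = p := huniq z <| hconv.isMinOn_of_gradient_eq_zero hdiff <|
    tendsto_nhds_unique ((hcont.tendsto z).comp hxφ) (hgrad.comp hφ.tendsto_atTop)
  subst hz
  exact tendsto_of_antitone_dist_of_mem_closure_range hanti
    (mem_closure_of_tendsto hxφ (Eventually.of_forall fun k => mem_range_self _))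

/-- Convergence of (non-stochastic) gradient descent with step sizes converging to a limit
`αinf ∈ (0, 1/L)`, for a convex `L`-smooth function with a unique global minimizer. -/
theorem gradient_descent_convergence
    (n : ℕ) (f : EuclideanSpace ℝ (Fin n) → ℝ)
    (hconv : ConvexOn ℝ Set.univ f) (hdiff : Differentiable ℝ f)
    (L : ℝ) (hL : 0 < L)
    (hlip : ∀ x y : EuclideanSpace ℝ (Fin n),
      ‖gradient f x - gradient f y‖ ≤ L * ‖x - y‖)
    (θstar : EuclideanSpace ℝ (Fin n))
    (hmin : ∀ x : EuclideanSpace ℝ (Fin n), f θstar ≤ f x)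
    (huniq : ∀ y : EuclideanSpace ℝ (Fin n),
      (∀ x : EuclideanSpace ℝ (Fin n), f y ≤ f x) → y = θstar)
    (κ : ℕ → ℝ) (αinf : ℝ) (hκ : Tendsto κ atTop (𝓝 αinf))
    (hαinfpos : 0 < αinf) (hαinflt : αinf < 1 / L)
    (θ : ℕ → EuclideanSpace ℝ (Fin n))
    (hupd : ∀ t : ℕ, θ (t + 1) = θ t - κ t • gradient f (θ t)) :
    Tendsto θ atTop (𝓝 θstar) := by
  obtain ⟨T, hT⟩ := eventually_atTop.1 (hκ (Icc_mem_nhds (half_lt_self hαinfpos) hαinflt))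
  have hwindow : 1 / L < 2 / L := div_lt_div_of_pos_right one_lt_two hL
  refine (tendsto_add_atTop_iff_nat T).1 <|
    tendsto_gradient_descent_of_mem_Icc hconv hdiff hL hlip (fun x _ => hmin x)
      (fun y hy => huniq y fun x => hy (mem_univ x)) (half_pos hαinfpos) hwindow
      (fun k => hT (k + T) le_add_self) fun k => ?_
  simpa [add_right_comm] using hupd (k + T)
end
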